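/- arXiv:1601.01735 — 5 statements merged into one kernel-verified Lean document; each statement's English description precedes it below -/
import Mathlib

section
/- Let A be a commutative ring that is also a ℚ-algebra, and let D, Δ, δ, δ' : A → A be derivations. Let ρ, μ, τ, π ∈ A and let Ψ be a unit of A satisfying the reduced Bianchi system DΨ = 3ρΨ, ΔΨ = -3μΨ, δΨ = 3τΨ, δ'Ψ = -3πΨ. Then every unit φ of A with φ³ = Ψ² satisfies the reduced Maxwell system Dφ = 2ρφ, Δφ = -2μφ, δφ = 2τφ, δ'φ = -2πφ. -/
private lemma aux_cube {A : Type*} [CommRing A] [Algebra ℚ A]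
    (E : Derivation ℚ A A) (c : A) (Ψ φ : Aˣ)
    (hΨ : E (Ψ : A) = 3 * c * (Ψ : A))
    (hφ : (φ : A) ^ 3 = (Ψ : A) ^ 2) :
    E (φ : A) = 2 * c * (φ : A) := by
  have h1 : E ((φ : A) ^ 3) = E ((Ψ : A) ^ 2) := by rw [hφ]
  rw [Derivation.leibniz_pow, Derivation.leibniz_pow, hΨ] at h1
  -- h1 : 3 • (φ^2 * E φ) = 2 • (Ψ^1 * (3*c*Ψ))
  have h2 : (3 : A) * ((φ : A) ^ 2 * E (φ : A)) = (3 : A) * ((φ : A) ^ 2 * (2 * c * (φ : A))) := by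
    have := h1
    simp only [nsmul_eq_mul, smul_eq_mul, Nat.cast_ofNat, pow_one] at this
    norm_num at this
    rw [this, show (Ψ:A) * (3*c*(Ψ:A)) = 3*c*(Ψ:A)^2 from by ring, ← hφ]
    ring
  have h3 : (3 : A) ≠ 0 ∨ True := Or.inr trivial
  -- cancel 3 using that 3 is a unit in a ℚ-algebra
  have three_unit : IsUnit (3 : A) := by
    rw [show (3 : A) = algebraMap ℚ A 3 from (map_ofNat (algebraMap ℚ A) 3).symm]
    exact (IsUnit.map (algebraMap ℚ A) (isUnit_iff_ne_zero.2 (by norm_num)))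
  have h4 : (φ : A) ^ 2 * E (φ : A) = (φ : A) ^ 2 * (2 * c * (φ : A)) :=
    three_unit.mul_left_cancel h2
  have sq_unit : IsUnit ((φ : A) ^ 2) := (φ.isUnit).pow 2
  exact sq_unit.mul_left_cancel h4

/-- If the Weyl scalar `Ψ` (a unit) satisfies the reduced vacuum Bianchi system
`DΨ = 3ρΨ, ΔΨ = -3μΨ, δΨ = 3τΨ, δ'Ψ = -3πΨ`, then every unit `φ` with `φ³ = Ψ²`
satisfies the reduced Maxwell system `Dφ = 2ρφ, Δφ = -2μφ, δφ = 2τφ, δ'φ = -2πφ`. -/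
theorem stmt_1 (A : Type*) [CommRing A] [Algebra ℚ A]
    (D Δ δ δ' : Derivation ℚ A A) (ρ μ τ π : A) (Ψ : Aˣ)
    (hD : D (Ψ : A) = 3 * ρ * (Ψ : A))
    (hΔ : Δ (Ψ : A) = -3 * μ * (Ψ : A))
    (hδ : δ (Ψ : A) = 3 * τ * (Ψ : A))
    (hδ' : δ' (Ψ : A) = -3 * π * (Ψ : A)) :
    ∀ φ : Aˣ, (φ : A) ^ 3 = (Ψ : A) ^ 2 →
      D (φ : A) = 2 * ρ * (φ : A) ∧ Δ (φ : A) = -2 * μ * (φ : A) ∧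
      δ (φ : A) = 2 * τ * (φ : A) ∧ δ' (φ : A) = -2 * π * (φ : A) := by
  intro φ hφ
  refine ⟨aux_cube D ρ Ψ φ hD hφ, ?_, aux_cube δ τ Ψ φ hδ hφ, ?_⟩
  · have := aux_cube Δ (-μ) Ψ φ (by rw [hΔ]; ring) hφ
    rw [this]; ring
  · have := aux_cube δ' (-π) Ψ φ (by rw [hδ']; ring) hφ
    rw [this]; ring
end

section
/- Let S be a set, let D, Δ, δ, δ' : (S → ℂ) → (S → ℂ) be ℂ-linear maps, let θ, ρ, μ, τ, π, γ : S → ℂ, and let C ∈ ℂ with C ≠ 0. Assume Dθ = C·ρ, Δθ = -C·μ, δθ = C·τ, δ'θ = -C·π, and that the Newman–Penrose commutation relation (with ε = 0) holds on θ: Δ(Dθ) - D(Δθ) = (γ + conj γ)·(Dθ) - (conj τ + π)·(δθ) - (τ + conj π)·(δ'θ), where products and conjugation of functions are pointwise. Then Δρ + Dμ = ρ·(γ + conj γ) - τ·(conj τ) + π·(conj π). In particular this integrability condition is independent of the value of C. -/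
/-- The first integrability condition (paper's eq. (20)), from the `Δ–D` commutator:
if `Dθ = Cρ, Δθ = -Cμ, δθ = Cτ, δ'θ = -Cπ` with `C ≠ 0` and the NP commutation
relation (with `ε = 0`) holds on `θ`, then `Δρ + Dμ = ρ(γ + γ̄) - ττ̄ + ππ̄`;
in particular the condition is independent of `C`. -/
theorem stmt_3 (S : Type*) (D Δ δ δ' : (S → ℂ) →ₗ[ℂ] (S → ℂ))
    (θ ρ μ τ π γ : S → ℂ) (C : ℂ) (hC : C ≠ 0)
    (hD : D θ = C • ρ) (hΔ : Δ θ = -C • μ) (hδ : δ θ = C • τ) (hδ' : δ' θ = -C • π)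
    (hcomm : Δ (D θ) - D (Δ θ) =
      (γ + star γ) * (D θ) - (star τ + π) * (δ θ) - (τ + star π) * (δ' θ)) :
    Δ ρ + D μ = ρ * (γ + star γ) - τ * star τ + π * star π := by
  rw [hD, hΔ, hδ, hδ', map_smul, map_smul] at hcomm
  funext x
  have h := congrFun hcomm x
  simp only [Pi.smul_apply, Pi.sub_apply, Pi.add_apply, Pi.mul_apply, Pi.neg_apply,
    smul_eq_mul, neg_smul, neg_mul] at h ⊢
  exact mul_left_cancel₀ hC (by linear_combination h)
end

section
/- Let S be a set, let D, δ' : (S → ℂ) → (S → ℂ) be ℂ-linear maps, let θ, ρ, π, α, β : S → ℂ, and let C ∈ ℂ with C ≠ 0. Assume Dθ = C·ρ, δ'θ = -C·π, and that the Newman–Penrose commutation relation (with κ = σ = ε = 0) holds on θ: δ'(Dθ) - D(δ'θ) = (α + conj β - π)·(Dθ) - ρ·(δ'θ), where products and conjugation of functions are pointwise. Then δ'ρ + Dπ = ρ·(α + conj β). In particular this integrability condition is independent of the value of C. -/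
/-- The second integrability condition (paper's eq. (23)), from the `δ̄–D` commutator:
if `Dθ = Cρ, δ'θ = -Cπ` with `C ≠ 0` and the NP commutation relation
(with `κ = σ = ε = 0`) holds on `θ`, then `δ'ρ + Dπ = ρ(α + β̄)`;
in particular the condition is independent of `C`. -/
theorem stmt_4 (S : Type*) (D δ' : (S → ℂ) →ₗ[ℂ] (S → ℂ))
    (θ ρ π α β : S → ℂ) (C : ℂ) (hC : C ≠ 0)
    (hD : D θ = C • ρ) (hδ' : δ' θ = -C • π)
    (hcomm : δ' (D θ) - D (δ' θ) = (α + star β - π) * (D θ) - ρ * (δ' θ)) :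
    δ' ρ + D π = ρ * (α + star β) := by
  rw [hD, hδ', map_smul, map_smul] at hcomm
  funext x
  have h := congrFun hcomm x
  simp only [Pi.smul_apply, Pi.mul_apply, Pi.sub_apply, Pi.add_apply, Pi.neg_apply,
    neg_smul, smul_eq_mul] at h ⊢
  have : C * (δ' ρ x + D π x) = C * (ρ x * (α x + star (β x))) := by ring_nf; ring_nf at h; linear_combination h
  exact mul_left_cancel₀ hC this
end

section
/- Let S be a set, let Δ, δ : (S → ℂ) → (S → ℂ) be ℂ-linear maps, let θ, μ, τ, α, β, γ : S → ℂ, and let C ∈ ℂ with C ≠ 0. Assume Δθ = -C·μ, δθ = C·τ, and that the Newman–Penrose commutation relation (with ν = λ = 0) holds on θ: δ(Δθ) - Δ(δθ) = (τ - conj α - β)·(Δθ) + (μ - γ + conj γ)·(δθ), where products and conjugation of functions are pointwise. Then δμ + Δτ = τ·(γ - conj γ) - μ·(conj α + β). In particular this integrability condition is independent of the value of C. -/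
/-- The third integrability condition (paper's eq. (24)), from the `δ–Δ` commutator:
if `Δθ = -Cμ, δθ = Cτ` with `C ≠ 0` and the NP commutation relation
(with `ν = λ = 0`) holds on `θ`, then `δμ + Δτ = τ(γ - γ̄) - μ(ᾱ + β)`;
in particular the condition is independent of `C`. -/
theorem stmt_5 (S : Type*) (Δ δ : (S → ℂ) →ₗ[ℂ] (S → ℂ))
    (θ μ τ α β γ : S → ℂ) (C : ℂ) (hC : C ≠ 0)
    (hΔ : Δ θ = -C • μ) (hδ : δ θ = C • τ)
    (hcomm : δ (Δ θ) - Δ (δ θ) =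
      (τ - star α - β) * (Δ θ) + (μ - γ + star γ) * (δ θ)) :
    δ μ + Δ τ = τ * (γ - star γ) - μ * (star α + β) := by
  rw [hΔ, hδ, map_smul, map_smul] at hcomm
  funext s
  have h := congrFun hcomm s
  simp only [Pi.sub_apply, Pi.add_apply, Pi.mul_apply, Pi.smul_apply, Pi.neg_apply,
    smul_eq_mul] at h
  simp only [Pi.add_apply, Pi.sub_apply, Pi.mul_apply]
  refine mul_left_cancel₀ hC ?_
  linear_combination -h
end

section
/- Fix M, a, ℓ ∈ ℝ and r, θ ∈ ℝ, and set Σ = r² + (ℓ + a·cos θ)², Δ = r² - 2Mr - ℓ² + a², A = a·sin²θ - 2ℓ·cos θ. Define vectors l, n, m : Fin 4 → ℂ by l = ((Σ + aA)/Δ, 1, 0, a/Δ), n = ((Σ + aA)/(2Σ), -Δ/(2Σ), 0, a/(2Σ)), m = (1/(√2·(ℓ - i·r + a·cos θ)))·(A/sin θ, 0, -i, 1/sin θ), and the matrix G : Matrix (Fin 4) (Fin 4) ℂ by G μ ν = l μ · n ν + n μ · l ν - m μ · conj (m ν) - conj (m μ) · m ν. Assume Δ ≠ 0, sin θ ≠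 0 and Σ ≠ 0. Then for every ω : Fin 4 → ℂ satisfying ∑_μ ω μ · G μ ν = (1 if ν = 0, else 0) for all ν ∈ Fin 4, one has ∑_μ ω μ · (n μ - (Δ/(2Σ))·l μ) = 0. -/
open Complex

/-- Vanishing of the radial energy flux `T¹₀` of the Coulomb field on the
Kerr–Taub–NUT background: for the NP tetrad `l, n, m` and the contravariant metric
`G^{μν} = l^μn^ν + n^μl^ν - m^μm̄^ν - m̄^μm^ν`, every covector `ω` with `ω·G = e₀`
(i.e. the row `g₀σ` of the covariant metric) annihilates `w = n - (Δ/(2Σ))·l`. -/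
theorem stmt_9 (M a ℓ r θ : ℝ) (Sig Δ Av : ℝ)
    (hSig : Sig = r ^ 2 + (ℓ + a * Real.cos θ) ^ 2)
    (hΔ : Δ = r ^ 2 - 2 * M * r - ℓ ^ 2 + a ^ 2)
    (hAv : Av = a * Real.sin θ ^ 2 - 2 * ℓ * Real.cos θ)
    (l n m : Fin 4 → ℂ)
    (hl : l = ![((Sig : ℂ) + (a : ℂ) * (Av : ℂ)) / (Δ : ℂ), 1, 0, (a : ℂ) / (Δ : ℂ)])
    (hn : n = ![((Sig : ℂ) + (a : ℂ) * (Av : ℂ)) / (2 * (Sig : ℂ)),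
      -(Δ : ℂ) / (2 * (Sig : ℂ)), 0, (a : ℂ) / (2 * (Sig : ℂ))])
    (hm : m = (1 / ((Real.sqrt 2 : ℂ) *
        ((ℓ : ℂ) - Complex.I * (r : ℂ) + (a : ℂ) * (Real.cos θ : ℂ)))) •
      ![(Av : ℂ) / (Real.sin θ : ℂ), 0, -Complex.I, 1 / (Real.sin θ : ℂ)])
    (G : Matrix (Fin 4) (Fin 4) ℂ)
    (hG : ∀ μ ν, G μ ν = l μ * n ν + n μ * l ν
      - m μ * (starRingEnd ℂ) (m ν) - (starRingEnd ℂ) (m μ) * m ν)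
    (hΔ0 : Δ ≠ 0) (hsin : Real.sin θ ≠ 0) (hSig0 : Sig ≠ 0) :
    ∀ ω : Fin 4 → ℂ, (∀ ν : Fin 4, ∑ μ : Fin 4, ω μ * G μ ν = if ν = 0 then 1 else 0) →
      ∑ μ : Fin 4, ω μ * (n μ - ((Δ : ℂ) / (2 * (Sig : ℂ))) * l μ) = 0 := by
  intro ω hω
  have key : ∀ μ, n μ - ((Δ : ℂ) / (2 * (Sig : ℂ))) * l μ = G μ 1 := by
    intro μ
    rw [hG]
    have hm1 : m 1 = 0 := by rw [hm]; simp
    have hn1 : n 1 = -(Δ : ℂ) / (2 * (Sig : ℂ)) := by rw [hn]; simp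
    have hl1 : l 1 = 1 := by rw [hl]; simp
    rw [hm1, hn1, hl1]
    simp
    ring
  calc ∑ μ : Fin 4, ω μ * (n μ - ((Δ : ℂ) / (2 * (Sig : ℂ))) * l μ)
      = ∑ μ : Fin 4, ω μ * G μ 1 := by simp_rw [key]
    _ = if (1 : Fin 4) = 0 then 1 else 0 := hω 1
    _ = 0 := by norm_num
end
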